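/- arXiv:1410.4218 — 9 statements merged into one kernel-verified Lean document; each statement's English description precedes it below -/
import Mathlib

section
/- (Proposition 2, concavity part) The function g is strictly concave on [0,1]; it is differentiable on (0,1) with g'(x) = V̄(y_th(x)) for every x ∈ (0,1); moreover lim_{x→0+} g'(x) = ∞ and lim_{x→1−} g'(x) = 0. -/
open MeasureTheory Set Filter Topology

/-!
`g = G ∘ y_th` with `G t = ∫_t^∞ V̄ f_Y`, and `y_th` is the inverse of the strictly
decreasing tail `F t = ∫_t^∞ f_Y`, whose derivative is `-f_Y`. By the inverse function rule
`g' = G'(y_th) / F'(y_th) = V̄(y_th)`, which is strictly decreasing because `V̄` increases and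
`y_th` decreases; with continuity of `g` at the endpoints this gives strict concavity. The
limits of `g'` follow from `y_th(x) → ∞` as `x → 0⁺` and `y_th(x) → 0⁺` as `x → 1⁻`.
-/

section TailIntegral

variable {E : Type*} [NormedAddCommGroup E] [NormedSpace ℝ E]

theorem hasDerivAt_integral_Ioi [CompleteSpace E] {h : ℝ → E} {a t : ℝ}
    (hint : IntegrableOn h (Ioi a)) (hcont : ContinuousOn h (Ioi a)) (ht : a < t) :
    HasDerivAt (fun s => ∫ y in Ioi s, h y) (-h t) t := by
  have hii : IntervalIntegrable h volume a t :=
    (intervalIntegrable_iff_integrableOn_Ioc_of_le ht.le).2 (hint.mono_set Ioc_subset_Ioi_self)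
  have hprim := intervalIntegral.integral_hasDerivAt_right hii
    (hcont.stronglyMeasurableAtFilter isOpen_Ioi t ht) (hcont.continuousAt (Ioi_mem_nhds ht))
  refine (hprim.const_sub (∫ y in Ioi a, h y)).congr_of_eventuallyEq ?_
  filter_upwards [Ioi_mem_nhds ht] with s hs
  rw [← intervalIntegral.integral_Ioi_sub_Ioi hint hs.le, sub_sub_cancel]

theorem continuousWithinAt_integral_Ioi {h : ℝ → E} {a : ℝ} (hint : IntegrableOn h (Ioi a)) :
    ContinuousWithinAt (fun s => ∫ y in Ioi s, h y) (Ici a) a := by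
  have hii : IntervalIntegrable h volume (min a a) (max a (a + 1)) := by
    rw [min_self, max_eq_right (by linarith),
      intervalIntegrable_iff_integrableOn_Ioc_of_le (by linarith)]
    exact hint.mono_set Ioc_subset_Ioi_self
  have hprim : ContinuousWithinAt (fun s => (∫ y in Ioi a, h y) - ∫ y in a..s, h y)
      (Icc a (a + 1)) a :=
    (intervalIntegral.continuousWithinAt_primitive (measure_singleton a) hii).const_sub _
  refine (hprim.mono_of_mem_nhdsWithin (Icc_mem_nhdsGE (by linarith))).congr_of_mem ?_ self_mem_Ici
  intro s hs
  rw [← intervalIntegral.integral_Ioi_sub_Ioi hint hs, sub_sub_cancel]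

theorem strictAntiOn_integral_Ioi {h : ℝ → ℝ} {a : ℝ} (hint : IntegrableOn h (Ioi a))
    (hpos : ∀ y ∈ Ioi a, 0 < h y) : StrictAntiOn (fun s => ∫ y in Ioi s, h y) (Ici a) := by
  intro s hs t _ hst
  have hii : IntervalIntegrable h volume s t :=
    (intervalIntegrable_iff_integrableOn_Ioc_of_le hst.le).2
      (hint.mono_set fun y hy => lt_of_le_of_lt hs hy.1)
  have hdiff := intervalIntegral.integral_Ioi_sub_Ioi (hint.mono_set (Ioi_subset_Ioi hs)) hst.le
  have hpos' := intervalIntegral.intervalIntegral_pos_of_pos_on hii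
    (fun y hy => hpos y (lt_of_le_of_lt hs hy.1)) hst
  exact sub_pos.1 (hdiff ▸ hpos')

theorem integral_Ioi_pos {h : ℝ → ℝ} {a t : ℝ} (hint : IntegrableOn h (Ioi a))
    (hpos : ∀ y ∈ Ioi a, 0 < h y) (ht : a ≤ t) : 0 < ∫ y in Ioi t, h y := by
  have hlt := strictAntiOn_integral_Ioi hint hpos ht (show a ≤ t + 1 by linarith) (lt_add_one t)
  have hnonneg : 0 ≤ ∫ y in Ioi (t + 1), h y := setIntegral_nonneg measurableSet_Ioi
    fun y hy => (hpos y (ht.trans_lt ((lt_add_one t).trans hy))).le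
  exact hnonneg.trans_lt hlt

end TailIntegral

section RightInverse

variable {F y : ℝ → ℝ} {s : Set ℝ}

theorem rightInv_lt_iff (hF : StrictAntiOn F (Ici 0)) (hmaps : MapsTo y s (Ioi 0))
    (hinv : RightInvOn y F s) {x t : ℝ} (hx : x ∈ s) (ht : 0 ≤ t) : y x < t ↔ F t < x := by
  conv_rhs => rw [← hinv hx]
  exact (hF.lt_iff_gt ht (mem_Ici.2 (hmaps hx).le)).symm

theorem lt_rightInv_iff (hF : StrictAntiOn F (Ici 0)) (hmaps : MapsTo y s (Ioi 0))
    (hinv : RightInvOn y F s) {x t : ℝ} (hx : x ∈ s) (ht : 0 ≤ t) : t < y x ↔ x < F t := by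
  conv_rhs => rw [← hinv hx]
  exact (hF.lt_iff_gt (mem_Ici.2 (hmaps hx).le) ht).symm

theorem strictAntiOn_rightInv (hF : StrictAntiOn F (Ici 0)) (hmaps : MapsTo y s (Ioi 0))
    (hinv : RightInvOn y F s) : StrictAntiOn y s := fun x hx _ hx' hlt =>
  (rightInv_lt_iff hF hmaps hinv hx' (hmaps hx).le).2 (by rwa [hinv hx])

theorem continuousAt_rightInv (hF : StrictAntiOn F (Ici 0)) (hmaps : MapsTo y s (Ioi 0))
    (hinv : RightInvOn y F s) {x₀ : ℝ} (hs : s ∈ 𝓝 x₀) : ContinuousAt y x₀ := by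
  have hx₀ := mem_of_mem_nhds hs
  refine tendsto_order.2 ⟨fun a ha => ?_, fun b hb => ?_⟩
  · rcases lt_or_ge a 0 with ha0 | ha0
    · filter_upwards [hs] with x hx using ha0.trans (hmaps hx)
    · filter_upwards [hs, eventually_lt_nhds ((lt_rightInv_iff hF hmaps hinv hx₀ ha0).1 ha)]
        with x hx hxa using (lt_rightInv_iff hF hmaps hinv hx ha0).2 hxa
  · have hb0 : 0 ≤ b := ((hmaps hx₀).trans hb).le
    filter_upwards [hs, eventually_gt_nhds ((rightInv_lt_iff hF hmaps hinv hx₀ hb0).1 hb)]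
      with x hx hxb using (rightInv_lt_iff hF hmaps hinv hx hb0).2 hxb

theorem tendsto_rightInv_atTop (hF : StrictAntiOn F (Ici 0)) (hmaps : MapsTo y s (Ioi 0))
    (hinv : RightInvOn y F s) (hpos : ∀ t, 0 ≤ t → 0 < F t) (hs : s ∈ 𝓝[>] 0) :
    Tendsto y (𝓝[>] 0) atTop := by
  refine tendsto_atTop.2 fun M => ?_
  have hM : 0 ≤ max M 0 := le_max_right M 0
  filter_upwards [hs, (eventually_lt_nhds (hpos _ hM)).filter_mono nhdsWithin_le_nhds]
    with x hx hxM
  exact (le_max_left M 0).trans ((lt_rightInv_iff hF hmaps hinv hx hM).2 hxM).le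

theorem tendsto_rightInv_nhdsGT (hF : StrictAntiOn F (Ici 0)) (hmaps : MapsTo y s (Ioi 0))
    (hinv : RightInvOn y F s) {c : ℝ} (hF0 : F 0 = c) (hs : s ∈ 𝓝[<] c) :
    Tendsto y (𝓝[<] c) (𝓝[>] 0) := by
  subst hF0
  refine tendsto_nhdsWithin_iff.2 ⟨tendsto_order.2 ⟨fun a ha => ?_, fun b hb => ?_⟩, ?_⟩
  · filter_upwards [hs] with x hx using ha.trans (hmaps hx)
  · have hFb : F b < F 0 := hF self_mem_Ici (mem_Ici.2 hb.le) hb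
    filter_upwards [hs, (eventually_gt_nhds hFb).filter_mono nhdsWithin_le_nhds]
      with x hx hxb using (rightInv_lt_iff hF hmaps hinv hx hb.le).2 hxb
  · exact eventually_of_mem hs hmaps

end RightInverse

theorem HasDerivAt.comp_of_local_left_inverse {F G y : ℝ → ℝ} {x f' g' : ℝ}
    (hF : HasDerivAt F f' (y x)) (hG : HasDerivAt G g' (y x)) (hf' : f' ≠ 0)
    (hy : ContinuousAt y x) (hinv : ∀ᶠ z in 𝓝 x, F (y z) = z) :
    HasDerivAt (G ∘ y) (g' / f') x := by
  simpa only [div_eq_mul_inv] using hG.comp x (hF.of_local_left_inverse hy hf' hinv)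

theorem hasDerivAt_integral_Ioi_comp_rightInv {f k y : ℝ → ℝ} {s : Set ℝ}
    (hf_int : IntegrableOn f (Ioi 0)) (hf_cont : ContinuousOn f (Ioi 0))
    (hf_pos : ∀ t ∈ Ioi 0, 0 < f t) (hkf_int : IntegrableOn (fun t => k t * f t) (Ioi 0))
    (hk_cont : ContinuousOn k (Ioi 0)) (hmaps : MapsTo y s (Ioi 0))
    (hinv : RightInvOn y (fun t => ∫ u in Ioi t, f u) s) {x : ℝ} (hs : s ∈ 𝓝 x) :
    HasDerivAt (fun x => ∫ t in Ioi (y x), k t * f t) (k (y x)) x := by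
  have hy : 0 < y x := hmaps (mem_of_mem_nhds hs)
  have hF := strictAntiOn_integral_Ioi hf_int hf_pos
  have hcomp := (hasDerivAt_integral_Ioi hf_int hf_cont hy).comp_of_local_left_inverse
    (hasDerivAt_integral_Ioi hkf_int (hk_cont.mul hf_cont) hy) (neg_ne_zero.2 (hf_pos _ hy).ne')
    (continuousAt_rightInv hF hmaps hinv hs) (eventually_of_mem hs hinv)
  rwa [neg_div_neg_eq, mul_div_cancel_right₀ _ (hf_pos _ hy).ne'] at hcomp

theorem continuousOn_Icc_of_tendsto_endpoints {g : ℝ → ℝ} {a b : ℝ}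
    (hg : ContinuousOn g (Ioo a b)) (ha : Tendsto g (𝓝[>] a) (𝓝 (g a)))
    (hb : Tendsto g (𝓝[<] b) (𝓝 (g b))) : ContinuousOn g (Icc a b) := by
  intro x hx
  rcases eq_or_lt_of_le hx.1 with rfl | hax
  · exact (continuousWithinAt_Ioi_iff_Ici.1 ha).mono Icc_subset_Ici_self
  rcases eq_or_lt_of_le hx.2 with rfl | hxb
  · exact (continuousWithinAt_Iio_iff_Iic.1 hb).mono Icc_subset_Iic_self
  · exact (hg.continuousAt (Ioo_mem_nhds hax hxb)).continuousWithinAt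

/-- Proposition 2 (concavity part): `g` is strictly concave on `[0,1]`, differentiable on
`(0,1)` with `g'(x) = V̄(y_th(x))`, and `g'(x) → ∞` as `x → 0⁺`, `g'(x) → 0` as `x → 1⁻`. -/
theorem g_strictConcave_deriv
    (fY : ℝ → ℝ)
    (hfY_cont : ContinuousOn fY (Ioi 0))
    (hfY_pos : ∀ y ∈ Ioi (0:ℝ), 0 < fY y)
    (hfY_int : IntegrableOn fY (Ioi 0))
    (hfY_one : ∫ y in Ioi (0:ℝ), fY y = 1)
    (V : ℝ → ℝ)
    (hV_cont : ContinuousOn V (Ici 0))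
    (hV_mono : StrictMonoOn V (Ici 0))
    (hV0 : V 0 = 0)
    (hV_top : Tendsto V atTop atTop)
    (hVf_int : IntegrableOn (fun y => V y * fY y) (Ioi 0))
    (yth : ℝ → ℝ)
    (hyth : ∀ x ∈ Ioo (0:ℝ) 1, yth x ∈ Ioi (0:ℝ) ∧ ∫ y in Ioi (yth x), fY y = x)
    (g : ℝ → ℝ)
    (hg_def : ∀ x ∈ Ioo (0:ℝ) 1, g x = ∫ y in Ioi (yth x), V y * fY y)
    (hg0 : g 0 = 0)
    (hg1 : g 1 = ∫ y in Ioi (0:ℝ), V y * fY y) :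
    StrictConcaveOn ℝ (Icc 0 1) g ∧
      (∀ x ∈ Ioo (0:ℝ) 1, HasDerivAt g (V (yth x)) x) ∧
      Tendsto (deriv g) (𝓝[>] (0:ℝ)) atTop ∧
      Tendsto (deriv g) (𝓝[<] (1:ℝ)) (𝓝 0) := by
  set F : ℝ → ℝ := fun t => ∫ y in Ioi t, fY y
  have hF : StrictAntiOn F (Ici 0) := strictAntiOn_integral_Ioi hfY_int hfY_pos
  have hmaps : MapsTo yth (Ioo 0 1) (Ioi 0) := fun x hx => (hyth x hx).1
  have hinv : RightInvOn yth F (Ioo 0 1) := fun x hx => (hyth x hx).2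
  have hderiv : ∀ x ∈ Ioo (0:ℝ) 1, HasDerivAt g (V (yth x)) x := fun x hx =>
    (hasDerivAt_integral_Ioi_comp_rightInv hfY_int hfY_cont hfY_pos hVf_int
      (hV_cont.mono Ioi_subset_Ici_self) hmaps hinv (isOpen_Ioo.mem_nhds hx)).congr_of_eventuallyEq
      (eventually_of_mem (isOpen_Ioo.mem_nhds hx) hg_def)
  have hderiv_eq : EqOn (V ∘ yth) (deriv g) (Ioo 0 1) := fun x hx => (hderiv x hx).deriv.symm
  have hy_top : Tendsto yth (𝓝[>] 0) atTop := tendsto_rightInv_atTop hF hmaps hinv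
    (fun t ht => integral_Ioi_pos hfY_int hfY_pos ht) (Ioo_mem_nhdsGT one_pos)
  have hy_zero : Tendsto yth (𝓝[<] 1) (𝓝[Ici 0] 0) :=
    (tendsto_rightInv_nhdsGT hF hmaps hinv hfY_one (Ioo_mem_nhdsLT one_pos)).mono_right
      (nhdsWithin_mono _ Ioi_subset_Ici_self)
  refine ⟨StrictAntiOn.strictConcaveOn_of_deriv (convex_Icc 0 1) ?_ ?_, hderiv, ?_, ?_⟩
  · refine continuousOn_Icc_of_tendsto_endpoints
      (fun x hx => (hderiv x hx).continuousAt.continuousWithinAt) ?_ ?_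
    · rw [hg0]
      exact (tendsto_integral_Ioi_zero hy_top).congr'
        (eventually_of_mem (Ioo_mem_nhdsGT one_pos) fun x hx => (hg_def x hx).symm)
    · rw [hg1]
      exact ((continuousWithinAt_integral_Ioi hVf_int).tendsto.comp hy_zero).congr'
        (eventually_of_mem (Ioo_mem_nhdsLT one_pos) fun x hx => (hg_def x hx).symm)
  · rw [interior_Icc]
    exact (hV_mono.comp_strictAntiOn (strictAntiOn_rightInv hF hmaps hinv)
      fun x hx => mem_Ici.2 (hmaps hx).le).congr hderiv_eq
  · exact (hV_top.comp hy_top).congr' (eventually_of_mem (Ioo_mem_nhdsGT one_pos) hderiv_eq)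
  · have hV_zero : Tendsto V (𝓝[Ici 0] 0) (𝓝 0) := by
      simpa only [hV0] using (hV_cont 0 self_mem_Ici).tendsto
    exact (hV_zero.comp hy_zero).congr' (eventually_of_mem (Ioo_mem_nhdsLT one_pos) hderiv_eq)
end

section
/- (Energy-balance identity used in the proof of Proposition 4 and Appendix B) If π : {0,…,n} → ℝ is a probability vector (π(e) ≥ 0, Σ_e π(e) = 1) satisfying the detailed balance equations π(e)·β(1−η(e)) = π(e+1)·(1−β)·η(e+1) for all 0 ≤ e ≤ n−1, then the average transmission probability P := Σ_{e=0}^{n} π(e)·η(e) satisfies P = β·(1 − π(n)·(1−η(n))); in particular P ≤ β. -/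
open Finset

/-- Energy-balance identity: under detailed balance, the average transmission probability
`P = Σ π(e) η(e)` equals `β (1 − π(n)(1 − η(n)))`; in particular `P ≤ β`. -/
theorem energy_balance_identity
    (n : ℕ) (hn : 1 ≤ n)
    (β : ℝ) (hβ : β ∈ Set.Ioo (0:ℝ) 1)
    (η : ℕ → ℝ) (hη0 : η 0 = 0)
    (hη : ∀ e, 1 ≤ e → e ≤ n → η e ∈ Set.Ioc (0:ℝ) 1)
    (π : ℕ → ℝ)
    (hπnonneg : ∀ e ≤ n, 0 ≤ π e)
    (hπsum : ∑ e ∈ range (n + 1), π e = 1)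
    (hbal : ∀ e < n, π e * (β * (1 - η e)) = π (e + 1) * ((1 - β) * η (e + 1))) :
    (∑ e ∈ range (n + 1), π e * η e) = β * (1 - π n * (1 - η n)) ∧
    (∑ e ∈ range (n + 1), π e * η e) ≤ β := by
  set A := ∑ e ∈ range (n + 1), π e * η e with hA
  have hsum : ∑ e ∈ range n, π e * (β * (1 - η e))
      = ∑ e ∈ range n, π (e + 1) * ((1 - β) * η (e + 1)) :=
    Finset.sum_congr rfl fun e he => hbal e (Finset.mem_range.mp he)
  have hL : ∑ e ∈ range n, π e * (β * (1 - η e))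
      = β * (∑ e ∈ range n, π e) - β * (∑ e ∈ range n, π e * η e) := by
    rw [Finset.mul_sum, Finset.mul_sum, ← Finset.sum_sub_distrib]
    exact Finset.sum_congr rfl fun e _ => by ring
  have hR : ∑ e ∈ range n, π (e + 1) * ((1 - β) * η (e + 1)) = (1 - β) * A := by
    rw [hA, Finset.sum_range_succ' (fun e => π e * η e) n, hη0, mul_zero, add_zero,
      Finset.mul_sum]
    exact Finset.sum_congr rfl fun e _ => by ring
  have hS1 : ∑ e ∈ range n, π e = 1 - π n := by
    have := Finset.sum_range_succ π n
    linarith [hπsum]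
  have hS2 : ∑ e ∈ range n, π e * η e = A - π n * η n := by
    have := Finset.sum_range_succ (fun e => π e * η e) n
    simp only [hA] at *
    linarith
  have key : A = β * (1 - π n * (1 - η n)) := by
    rw [hL, hR, hS1, hS2] at hsum
    linear_combination -hsum
  refine ⟨key, ?_⟩
  have hπn : 0 ≤ π n := hπnonneg n le_rfl
  have hηn : η n ≤ 1 := (hη n hn le_rfl).2
  nlinarith [mul_nonneg (mul_nonneg hβ.1.le hπn) (by linarith : (0:ℝ) ≤ 1 - η n), key]
end

section
/- (Key lemma in the proof of Proposition 4) Let U ≥ 2 be an integer and define f(x) := g'(x)(1−x) − (U−1)g(x) for x ∈ (0,1) and F(x) := U·g(x)·(1−x)^{U−1} for x ∈ [0,1]. Then: (i) f is strictly decreasing on (0,1), lim_{x→0+} f(x) = ∞, and f(1/U) < 0; (ii) there is a unique x* ∈ (0, 1/U) with f(x*) = 0; (iii) F is strictly increasing on (0, x*) and strictly decreasing on (x*, 1); consequently x* is the unique maximizer of F on [0,1], and x* is the unique solution in (0, 1/U) of g'(x)(1−x) = (U−1)g(x). -/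
/-!
Concavity makes `g'` strictly decreasing, and positive because `g` increases, so
`f x = g' x (1 - x) - (U - 1) g x` is strictly decreasing. At `1/U` the tangent lies above the
chord from the origin, `g'(1/U) / U < g(1/U)`, which is exactly `f(1/U) < 0`.
Since `F' = U (1 - x)^(U - 2) f` and `F 0 = F 1 = 0`, Rolle's theorem yields a zero `x*` of `f`;
the sign change of `f` at `x*` makes `F` increase up to `x*` and decrease after it.
-/

open Set Filter Topology

namespace StrictConcaveOn

variable {S : Set ℝ} {g g' : ℝ → ℝ} {x y d : ℝ}

lemma strictAntiOn_of_hasDerivAt (hg : StrictConcaveOn ℝ S g)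
    (hd : ∀ x ∈ S, HasDerivAt g (g' x) x) : StrictAntiOn g' S := fun x hx y hy hxy =>
  (hg.lt_slope_of_hasDerivAt hx hy hxy (hd y hy)).trans
    (hg.slope_lt_of_hasDerivAt hx hy hxy (hd x hx))

lemma pos_of_hasDerivAt_of_strictMonoOn (hg : StrictConcaveOn ℝ S g) (hmono : StrictMonoOn g S)
    (hx : x ∈ S) (hy : y ∈ S) (hxy : x < y) (hd : HasDerivAt g d x) : 0 < d :=
  ((slope_pos_iff hxy).2 (hmono hx hy hxy)).trans (hg.slope_lt_of_hasDerivAt hx hy hxy hd)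

lemma mul_sub_lt_sub_of_hasDerivAt (hg : StrictConcaveOn ℝ S g)
    (hx : x ∈ S) (hy : y ∈ S) (hxy : x < y) (hd : HasDerivAt g d y) :
    d * (y - x) < g y - g x := by
  have h := hg.lt_slope_of_hasDerivAt hx hy hxy hd
  rwa [slope_def_field, lt_div_iff₀ (sub_pos.2 hxy)] at h

end StrictConcaveOn

section DerivativeTest

variable {F F' k φ : ℝ → ℝ} {a b c : ℝ}

lemma strictMonoOn_Icc_of_hasDerivAt_pos (hF : ContinuousOn F (Icc a b))
    (hd : ∀ x ∈ Ioo a b, HasDerivAt F (F' x) x) (hpos : ∀ x ∈ Ioo a b, 0 < F' x) :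
    StrictMonoOn F (Icc a b) :=
  strictMonoOn_of_hasDerivWithinAt_pos (convex_Icc a b) hF
    (fun x hx => (hd x (by rwa [interior_Icc] at hx)).hasDerivWithinAt)
    (fun x hx => hpos x (by rwa [interior_Icc] at hx))

lemma strictAntiOn_Icc_of_hasDerivAt_neg (hF : ContinuousOn F (Icc a b))
    (hd : ∀ x ∈ Ioo a b, HasDerivAt F (F' x) x) (hneg : ∀ x ∈ Ioo a b, F' x < 0) :
    StrictAntiOn F (Icc a b) :=
  strictAntiOn_of_hasDerivWithinAt_neg (convex_Icc a b) hF
    (fun x hx => (hd x (by rwa [interior_Icc] at hx)).hasDerivWithinAt)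
    (fun x hx => hneg x (by rwa [interior_Icc] at hx))

variable (hF : ContinuousOn F (Icc a b)) (hd : ∀ x ∈ Ioo a b, HasDerivAt F (k x * φ x) x)
  (hk : ∀ x ∈ Ioo a b, 0 < k x)
include hF hd hk

lemma exists_eq_zero_of_hasDerivAt_mul (hab : a < b) (hFab : F a = F b) :
    ∃ c ∈ Ioo a b, φ c = 0 := by
  obtain ⟨c, hc, hc0⟩ := exists_hasDerivAt_eq_zero hab hF hFab hd
  exact ⟨c, hc, (mul_eq_zero.1 hc0).resolve_left (hk c hc).ne'⟩

variable (hφ : StrictAntiOn φ (Ioo a b)) (hc : c ∈ Ioo a b) (hφc : φ c = 0)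
include hφ hc hφc

lemma strictMonoOn_Icc_of_hasDerivAt_mul_of_strictAntiOn : StrictMonoOn F (Icc a c) := by
  have hsub : Ioo a c ⊆ Ioo a b := Ioo_subset_Ioo_right hc.2.le
  refine strictMonoOn_Icc_of_hasDerivAt_pos (hF.mono (Icc_subset_Icc_right hc.2.le))
    (fun x hx => hd x (hsub hx)) fun x hx => mul_pos (hk x (hsub hx)) ?_
  exact hφc ▸ hφ (hsub hx) hc hx.2

lemma strictAntiOn_Icc_of_hasDerivAt_mul_of_strictAntiOn : StrictAntiOn F (Icc c b) := by
  have hsub : Ioo c b ⊆ Ioo a b := Ioo_subset_Ioo_left hc.1.le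
  refine strictAntiOn_Icc_of_hasDerivAt_neg (hF.mono (Icc_subset_Icc_left hc.1.le))
    (fun x hx => hd x (hsub hx)) fun x hx => mul_neg_of_pos_of_neg (hk x (hsub hx)) ?_
  exact hφc ▸ hφ hc (hsub hx) hx.1

end DerivativeTest

lemma lt_of_strictMonoOn_Icc_of_strictAntiOn_Icc {F : ℝ → ℝ} {a b c x : ℝ}
    (hmono : StrictMonoOn F (Icc a c)) (hanti : StrictAntiOn F (Icc c b)) (hac : a ≤ c)
    (hcb : c ≤ b) (hx : x ∈ Icc a b) (hxc : x ≠ c) : F x < F c := by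
  rcases hxc.lt_or_gt with h | h
  · exact hmono ⟨hx.1, h.le⟩ ⟨hac, le_rfl⟩ h
  · exact hanti ⟨le_rfl, hcb⟩ ⟨h.le, hx.2⟩ h

lemma hasDerivAt_mul_one_sub_pow_succ {g : ℝ → ℝ} {d x : ℝ} (n : ℕ) (hg : HasDerivAt g d x) :
    HasDerivAt (fun y => g y * (1 - y) ^ (n + 1))
      ((1 - x) ^ n * (d * (1 - x) - (n + 1) * g x)) x := by
  refine (hg.mul (((hasDerivAt_id x).const_sub 1).pow (n + 1))).congr_deriv ?_
  simp only [Pi.pow_apply, id, Nat.cast_add, Nat.cast_one, Nat.add_sub_cancel]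
  ring

section FirstOrderCondition

variable {g g' : ℝ → ℝ} {c : ℝ}

lemma hasDerivAt_mul_mul_one_sub_pow_pred {U : ℕ} (hU : 2 ≤ U) {x : ℝ}
    (hg : HasDerivAt g (g' x) x) :
    HasDerivAt (fun y => (U : ℝ) * g y * (1 - y) ^ (U - 1))
      (U * (1 - x) ^ (U - 2) * (g' x * (1 - x) - ((U : ℝ) - 1) * g x)) x := by
  have hU1 : U - 1 = U - 2 + 1 := by omega
  have hcast : ((U - 2 : ℕ) : ℝ) + 1 = U - 1 := by rw [Nat.cast_sub hU]; push_cast; ring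
  refine (((hasDerivAt_mul_one_sub_pow_succ (U - 2) hg).const_mul (U : ℝ)).congr_of_eventuallyEq
    (Eventually.of_forall fun y => by rw [hU1]; ring)).congr_deriv ?_
  rw [hcast]
  ring

lemma strictAntiOn_deriv_mul_one_sub_sub_mul (hc : 0 ≤ c) (hmono : StrictMonoOn g (Icc 0 1))
    (hconc : StrictConcaveOn ℝ (Icc 0 1) g) (hd : ∀ x ∈ Ioo (0:ℝ) 1, HasDerivAt g (g' x) x) :
    StrictAntiOn (fun x => g' x * (1 - x) - c * g x) (Ioo 0 1) := by
  have hg'anti : StrictAntiOn g' (Ioo 0 1) :=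
    (hconc.subset Ioo_subset_Icc_self (convex_Ioo 0 1)).strictAntiOn_of_hasDerivAt hd
  intro x hx y hy hxy
  have hg'y : 0 < g' y := hconc.pos_of_hasDerivAt_of_strictMonoOn hmono (Ioo_subset_Icc_self hy)
    (right_mem_Icc.2 zero_le_one) hy.2 (hd y hy)
  have h1 : g' y * (1 - y) < g' x * (1 - x) :=
    mul_lt_mul'' (hg'anti hx hy hxy) (by linarith) hg'y.le (by linarith [hy.2])
  have h2 : c * g x ≤ c * g y := mul_le_mul_of_nonneg_left
    (hmono.monotoneOn (Ioo_subset_Icc_self hx) (Ioo_subset_Icc_self hy) hxy.le) hc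
  simp only
  linarith

lemma tendsto_deriv_mul_one_sub_sub_mul_atTop {b : ℝ} (hg'0 : Tendsto g' (𝓝[>] 0) atTop)
    (hg0 : Tendsto g (𝓝[>] 0) (𝓝 b)) :
    Tendsto (fun x => g' x * (1 - x) - c * g x) (𝓝[>] 0) atTop := by
  have h1 : Tendsto (fun x : ℝ => 1 - x) (𝓝[>] 0) (𝓝 1) := by
    simpa using (tendsto_const_nhds (x := (1:ℝ))).sub
      (tendsto_id.mono_left (nhdsWithin_le_nhds (a := (0:ℝ)) (s := Ioi 0)))
  simpa only [sub_eq_add_neg] using (hg'0.atTop_mul_pos one_pos h1).atTop_add (hg0.const_mul c).neg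

lemma deriv_mul_one_sub_sub_mul_inv_neg {u : ℝ} (hu : 1 < u)
    (hconc : StrictConcaveOn ℝ (Icc 0 1) g) (hg0 : g 0 = 0)
    (hd : HasDerivAt g (g' (1 / u)) (1 / u)) :
    g' (1 / u) * (1 - 1 / u) - (u - 1) * g (1 / u) < 0 := by
  have hinv : 1 / u ∈ Ioo 0 1 := ⟨by positivity, (div_lt_one (by positivity)).2 hu⟩
  have htangent := hconc.mul_sub_lt_sub_of_hasDerivAt (left_mem_Icc.2 zero_le_one)
    (Ioo_subset_Icc_self hinv) hinv.1 hd
  rw [hg0, sub_zero, sub_zero] at htangent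
  have hfactor : g' (1 / u) * (1 - 1 / u) - (u - 1) * g (1 / u)
      = (u - 1) * (g' (1 / u) * (1 / u) - g (1 / u)) := by
    field_simp
  rw [hfactor]
  exact mul_neg_of_pos_of_neg (by linarith) (by linarith)

end FirstOrderCondition

theorem key_lemma_prop4_general
    (g g' : ℝ → ℝ)
    (hg_cont : ContinuousOn g (Icc 0 1))
    (hg_mono : StrictMonoOn g (Icc 0 1))
    (hg_conc : StrictConcaveOn ℝ (Icc 0 1) g)
    (hg_deriv : ∀ x ∈ Ioo (0:ℝ) 1, HasDerivAt g (g' x) x)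
    (hg0 : g 0 = 0)
    (hg'0 : Tendsto g' (𝓝[>] (0:ℝ)) atTop)
    (U : ℕ) (hU : 2 ≤ U)
    (f F : ℝ → ℝ)
    (hf : ∀ x, f x = g' x * (1 - x) - ((U : ℝ) - 1) * g x)
    (hF : ∀ x, F x = (U : ℝ) * g x * (1 - x) ^ (U - 1)) :
    StrictAntiOn f (Ioo 0 1) ∧
    Tendsto f (𝓝[>] (0:ℝ)) atTop ∧
    f (1 / (U : ℝ)) < 0 ∧
    ∃ xstar ∈ Ioo (0:ℝ) (1 / (U : ℝ)), f xstar = 0 ∧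
      (∀ x ∈ Ioo (0:ℝ) (1 / (U : ℝ)), f x = 0 → x = xstar) ∧
      StrictMonoOn F (Ioo 0 xstar) ∧
      StrictAntiOn F (Ioo xstar 1) ∧
      (∀ x ∈ Icc (0:ℝ) 1, x ≠ xstar → F x < F xstar) ∧
      (∀ x ∈ Ioo (0:ℝ) (1 / (U : ℝ)),
        g' x * (1 - x) = ((U : ℝ) - 1) * g x → x = xstar) := by
  have hU' : (1:ℝ) < U := by exact_mod_cast hU
  have hinvU : 1 / (U:ℝ) ∈ Ioo 0 1 := ⟨by positivity, (div_lt_one (by positivity)).2 hU'⟩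
  have hf_anti : StrictAntiOn f (Ioo 0 1) := funext hf ▸
    strictAntiOn_deriv_mul_one_sub_sub_mul (by linarith) hg_mono hg_conc hg_deriv
  have hf_invU : f (1 / U) < 0 :=
    hf _ ▸ deriv_mul_one_sub_sub_mul_inv_neg hU' hg_conc hg0 (hg_deriv _ hinvU)
  have hg_cont0 : ContinuousWithinAt g (Ioi 0) 0 :=
    (hg_cont 0 (left_mem_Icc.2 zero_le_one)).mono_of_mem_nhdsWithin (Icc_mem_nhdsGT one_pos)
  have hF_cont : ContinuousOn F (Icc 0 1) := funext hF ▸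
    (continuousOn_const.mul hg_cont).mul ((continuousOn_const.sub continuousOn_id).pow _)
  have hF_deriv : ∀ x ∈ Ioo (0:ℝ) 1, HasDerivAt F (U * (1 - x) ^ (U - 2) * f x) x :=
    fun x hx => funext hF ▸ hf x ▸ hasDerivAt_mul_mul_one_sub_pow_pred hU (hg_deriv x hx)
  have hk : ∀ x ∈ Ioo (0:ℝ) 1, 0 < (U:ℝ) * (1 - x) ^ (U - 2) := fun x hx =>
    mul_pos (by linarith) (pow_pos (sub_pos.2 hx.2) _)
  have hF01 : F 0 = F 1 := by simp [hF, hg0, zero_pow (by omega : U - 1 ≠ 0)]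
  obtain ⟨xstar, hxstar, hf_xstar⟩ :=
    exists_eq_zero_of_hasDerivAt_mul hF_cont hF_deriv hk one_pos hF01
  have huniq : ∀ x ∈ Ioo (0:ℝ) (1 / U), f x = 0 → x = xstar := fun x hx hfx =>
    hf_anti.injOn ⟨hx.1, hx.2.trans hinvU.2⟩ hxstar (hfx.trans hf_xstar.symm)
  have hF_mono := strictMonoOn_Icc_of_hasDerivAt_mul_of_strictAntiOn hF_cont hF_deriv hk hf_anti
    hxstar hf_xstar
  have hF_anti := strictAntiOn_Icc_of_hasDerivAt_mul_of_strictAntiOn hF_cont hF_deriv hk hf_anti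
    hxstar hf_xstar
  refine ⟨hf_anti, funext hf ▸ tendsto_deriv_mul_one_sub_sub_mul_atTop hg'0 hg_cont0, hf_invU,
    xstar, ⟨hxstar.1, (hf_anti.lt_iff_gt hinvU hxstar).1 (hf_xstar ▸ hf_invU)⟩, hf_xstar, huniq,
    hF_mono.mono Ioo_subset_Icc_self, hF_anti.mono Ioo_subset_Icc_self,
    fun x hx hne => lt_of_strictMonoOn_Icc_of_strictAntiOn_Icc hF_mono hF_anti hxstar.1.le
      hxstar.2.le hx hne, fun x hx h => huniq x hx ?_⟩
  rw [hf, h, sub_self]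

/-- Key lemma in the proof of Proposition 4: properties of
`f(x) = g'(x)(1−x) − (U−1)g(x)` and `F(x) = U g(x)(1−x)^{U−1}`. -/
theorem key_lemma_prop4
    (g g' : ℝ → ℝ)
    (hg_cont : ContinuousOn g (Icc 0 1))
    (hg_mono : StrictMonoOn g (Icc 0 1))
    (hg_conc : StrictConcaveOn ℝ (Icc 0 1) g)
    (hg_deriv : ∀ x ∈ Ioo (0:ℝ) 1, HasDerivAt g (g' x) x)
    (hg'_cont : ContinuousOn g' (Ioo 0 1))
    (hg0 : g 0 = 0)
    (hg'0 : Tendsto g' (𝓝[>] (0:ℝ)) atTop)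
    (hg'1 : Tendsto g' (𝓝[<] (1:ℝ)) (𝓝 0))
    (U : ℕ) (hU : 2 ≤ U)
    (f F : ℝ → ℝ)
    (hf : ∀ x, f x = g' x * (1 - x) - ((U : ℝ) - 1) * g x)
    (hF : ∀ x, F x = (U : ℝ) * g x * (1 - x) ^ (U - 1)) :
    StrictAntiOn f (Ioo 0 1) ∧
    Tendsto f (𝓝[>] (0:ℝ)) atTop ∧
    f (1 / (U : ℝ)) < 0 ∧
    ∃ xstar ∈ Ioo (0:ℝ) (1 / (U : ℝ)), f xstar = 0 ∧
      (∀ x ∈ Ioo (0:ℝ) (1 / (U : ℝ)), f x = 0 → x = xstar) ∧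
      StrictMonoOn F (Ioo 0 xstar) ∧
      StrictAntiOn F (Ioo xstar 1) ∧
      (∀ x ∈ Icc (0:ℝ) 1, x ≠ xstar → F x < F xstar) ∧
      (∀ x ∈ Ioo (0:ℝ) (1 / (U : ℝ)),
        g' x * (1 - x) = ((U : ℝ) - 1) * g x → x = xstar) :=
  key_lemma_prop4_general g g' hg_cont hg_mono hg_conc hg_deriv hg0 hg'0 U hU f F hf hF
end

section
/- (Proposition 4) The network utility under symmetric threshold policies is strictly upper bounded: Σ_{s∈S} π_S(s)·U·G_s·(1−P_s)^{U−1} < Σ_{s∈S} π_S(s)·U·g(min{x*, β_s})·(1−min{x*, β_s})^{U−1}, where x* ∈ (0, 1/U) is the unique solution of g'(x)(1−x) = (U−1)g(x). -/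
open Set Finset Filter Topology

/-!
Put `F x = g x * (1 - x) ^ (U - 1)`. Then
`F' x = (1 - x) ^ (U - 2) * (g' x * (1 - x) - (U - 1) * g x)`, and the second factor is strictly
decreasing (as `g'` is nonnegative and decreasing, and `g` increasing) with its root at `x*`; so `F`
increases up to `x*` and decreases afterwards, and `F (P_s) ≤ F (min x* β_s)` whenever
`P_s ≤ β_s`. Strict Jensen gives `G_s < g (P_s)`, since `η_s` takes the distinct values `0` and
`η_s 1` with positive weight.
-/

section Distribution

variable {n : ℕ} {w η : ℕ → ℝ}

lemma mem_Icc_zero_one_of_le (hη0 : η 0 = 0) (hη : ∀ e, 1 ≤ e → e ≤ n → η e ∈ Ioc (0 : ℝ) 1)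
    {e : ℕ} (he : e ≤ n) : η e ∈ Icc (0 : ℝ) 1 := by
  rcases Nat.eq_zero_or_pos e with rfl | he_pos
  · simp [hη0]
  · exact Ioc_subset_Icc_self (hη e he_pos he)

lemma sum_mul_pos (hn : 1 ≤ n) (hw : ∀ e ≤ n, 0 < w e) (hη0 : η 0 = 0)
    (hη : ∀ e, 1 ≤ e → e ≤ n → η e ∈ Ioc (0 : ℝ) 1) :
    0 < ∑ e ∈ range (n + 1), w e * η e := by
  refine sum_pos' (fun e he => ?_) ⟨1, mem_range.2 (by omega), ?_⟩
  · have he : e ≤ n := Nat.lt_succ_iff.1 (mem_range.1 he)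
    exact mul_nonneg (hw e he).le (mem_Icc_zero_one_of_le hη0 hη he).1
  · exact mul_pos (hw 1 hn) (hη 1 le_rfl hn).1

lemma sum_mul_map_lt_map_sum {g : ℝ → ℝ} (hg : StrictConcaveOn ℝ (Icc 0 1) g) (hn : 1 ≤ n)
    (hw : ∀ e ≤ n, 0 < w e) (hw_sum : ∑ e ∈ range (n + 1), w e = 1) (hη0 : η 0 = 0)
    (hη : ∀ e, 1 ≤ e → e ≤ n → η e ∈ Ioc (0 : ℝ) 1) :
    ∑ e ∈ range (n + 1), w e * g (η e) < g (∑ e ∈ range (n + 1), w e * η e) :=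
  hg.lt_map_sum (fun e he => hw e (Nat.lt_succ_iff.1 (mem_range.1 he))) hw_sum
    (fun e he => mem_Icc_zero_one_of_le hη0 hη (Nat.lt_succ_iff.1 (mem_range.1 he)))
    ⟨0, mem_range.2 (by omega), 1, mem_range.2 (by omega), by
      rw [hη0]; exact (hη 1 le_rfl hn).1.ne⟩

end Distribution

lemma StrictConcaveOn.strictAntiOn_of_hasDerivAt_s6 {S : Set ℝ} {g g' : ℝ → ℝ}
    (hg : StrictConcaveOn ℝ S g) (hd : ∀ x ∈ S, HasDerivAt g (g' x) x) : StrictAntiOn g' S :=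
  fun x hx y hy hxy => by
    simpa only [(hd x hx).deriv, (hd y hy).deriv] using
      hg.strictAntiOn_deriv (fun z hz => (hd z hz).differentiableAt) hx hy hxy

lemma HasDerivAt.nonneg_of_monotoneOn_of_isOpen {g : ℝ → ℝ} {g'x x : ℝ} {s : Set ℝ}
    (hd : HasDerivAt g g'x x) (hg : MonotoneOn g s) (hs : IsOpen s) (hx : x ∈ s) : 0 ≤ g'x := by
  simpa only [derivWithin_of_isOpen hs hx, hd.deriv] using hg.derivWithin_nonneg (x := x)

lemma hasDerivAt_mul_one_sub_pow {g : ℝ → ℝ} {g'x x : ℝ} (hd : HasDerivAt g g'x x) (k : ℕ) :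
    HasDerivAt (fun y => g y * (1 - y) ^ (k + 1))
      ((1 - x) ^ k * (g'x * (1 - x) - (k + 1) * g x)) x := by
  refine (hd.fun_mul (((hasDerivAt_id x).const_sub 1).fun_pow (k + 1))).congr_deriv ?_
  simp only [id, Nat.add_sub_cancel]
  push_cast
  ring

lemma strictAntiOn_mul_one_sub_sub {g g' : ℝ → ℝ} {c : ℝ} (hc : 0 ≤ c)
    (hg : MonotoneOn g (Ioo 0 1)) (hg' : StrictAntiOn g' (Ioo 0 1))
    (hg'_nonneg : ∀ x ∈ Ioo (0 : ℝ) 1, 0 ≤ g' x) :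
    StrictAntiOn (fun x => g' x * (1 - x) - c * g x) (Ioo 0 1) := by
  intro x hx y hy hxy
  have hg'xy := hg' hx hy hxy
  have hgxy := hg hx hy hxy.le
  have hg'y := hg'_nonneg y hy
  nlinarith [hy.2, mul_le_mul_of_nonneg_left hgxy hc]

lemma le_apply_min_of_monotoneOn_of_antitoneOn {F : ℝ → ℝ} {a b c p q : ℝ}
    (hmono : MonotoneOn F (Ioc a c)) (hanti : AntitoneOn F (Ico c b)) (hp : p ∈ Ioo a b)
    (hpq : p ≤ q) : F p ≤ F (min c q) := by
  rcases le_or_gt p c with hpc | hcp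
  · exact hmono ⟨hp.1, hpc⟩ ⟨hp.1.trans_le (le_min hpc hpq), min_le_left c q⟩ (le_min hpc hpq)
  · rw [min_eq_left (hcp.le.trans hpq)]
    exact hanti ⟨le_rfl, hcp.trans hp.2⟩ ⟨hcp.le, hp.2⟩ hcp.le

lemma monotoneOn_Ioc_antitoneOn_Ico_of_hasDerivAt {F F' : ℝ → ℝ} {a b c : ℝ} (hc : c ∈ Ioo a b)
    (hF : ∀ x ∈ Ioo a b, HasDerivAt F (F' x) x) (hF'_left : ∀ x ∈ Ioo a c, 0 ≤ F' x)
    (hF'_right : ∀ x ∈ Ioo c b, F' x ≤ 0) :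
    MonotoneOn F (Ioc a c) ∧ AntitoneOn F (Ico c b) := by
  have hF_cont : ContinuousOn F (Ioo a b) :=
    fun x hx => (hF x hx).continuousAt.continuousWithinAt
  refine ⟨monotoneOn_of_hasDerivWithinAt_nonneg (f' := F') (convex_Ioc a c)
      (hF_cont.mono (Ioc_subset_Ioo_right hc.2)) ?_ ?_,
    antitoneOn_of_hasDerivWithinAt_nonpos (f' := F') (convex_Ico c b)
      (hF_cont.mono (Ico_subset_Ioo_left hc.1)) ?_ ?_⟩ <;>
    simp only [interior_Ioc, interior_Ico]
  · exact fun x hx => (hF x ⟨hx.1, hx.2.trans hc.2⟩).hasDerivWithinAt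
  · exact hF'_left
  · exact fun x hx => (hF x ⟨hc.1.trans hx.1, hx.2⟩).hasDerivWithinAt
  · exact hF'_right

theorem monotoneOn_antitoneOn_mul_one_sub_pow {g g' : ℝ → ℝ} {x₀ : ℝ} (k : ℕ)
    (hd : ∀ x ∈ Ioo (0 : ℝ) 1, HasDerivAt g (g' x) x) (hg : MonotoneOn g (Ioo 0 1))
    (hg' : StrictAntiOn g' (Ioo 0 1)) (hx₀ : x₀ ∈ Ioo (0 : ℝ) 1)
    (hroot : g' x₀ * (1 - x₀) = (k + 1) * g x₀) :
    MonotoneOn (fun y => g y * (1 - y) ^ (k + 1)) (Ioc 0 x₀) ∧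
      AntitoneOn (fun y => g y * (1 - y) ^ (k + 1)) (Ico x₀ 1) := by
  have hh : StrictAntiOn (fun x => g' x * (1 - x) - (k + 1) * g x) (Ioo 0 1) :=
    strictAntiOn_mul_one_sub_sub (by positivity) hg hg'
      fun x hx => (hd x hx).nonneg_of_monotoneOn_of_isOpen hg isOpen_Ioo hx
  refine monotoneOn_Ioc_antitoneOn_Ico_of_hasDerivAt hx₀
    (fun x hx => hasDerivAt_mul_one_sub_pow (hd x hx) k) (fun x hx => ?_) (fun x hx => ?_)
  · have hx1 : x ∈ Ioo (0 : ℝ) 1 := ⟨hx.1, hx.2.trans hx₀.2⟩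
    have hhx := hh hx1 hx₀ hx.2
    exact mul_nonneg (pow_nonneg (by linarith [hx1.2]) k) (by simp only at hhx; linarith)
  · have hx1 : x ∈ Ioo (0 : ℝ) 1 := ⟨hx₀.1.trans hx.1, hx.2⟩
    have hhx := hh hx₀ hx1 hx.1
    exact mul_nonpos_of_nonneg_of_nonpos (pow_nonneg (by linarith [hx1.2]) k)
      (by simp only at hhx; linarith)

theorem network_utility_upper_bound_general
    (g g' : ℝ → ℝ)
    (hg_mono : StrictMonoOn g (Icc 0 1))
    (hg_conc : StrictConcaveOn ℝ (Icc 0 1) g)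
    (hg_deriv : ∀ x ∈ Ioo (0:ℝ) 1, HasDerivAt g (g' x) x)
    (U : ℕ) (hU : 2 ≤ U)
    (S : Type*) [Fintype S] [Nonempty S]
    (πS : S → ℝ) (hπS_pos : ∀ s, 0 < πS s)
    (β : S → ℝ) (hβ : ∀ s, β s ∈ Ioo (0:ℝ) 1)
    (n : ℕ) (hn : 1 ≤ n)
    (π : S → ℕ → ℝ) (hπ_pos : ∀ s, ∀ e ≤ n, 0 < π s e)
    (hπ_sum : ∀ s, ∑ e ∈ range (n + 1), π s e = 1)
    (η : S → ℕ → ℝ) (hη0 : ∀ s, η s 0 = 0)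
    (hη : ∀ s, ∀ e, 1 ≤ e → e ≤ n → η s e ∈ Ioc (0:ℝ) 1)
    (G P : S → ℝ)
    (hG : ∀ s, G s = ∑ e ∈ range (n + 1), π s e * g (η s e))
    (hP : ∀ s, P s = ∑ e ∈ range (n + 1), π s e * η s e)
    (hPβ : ∀ s, P s ≤ β s)
    (xstar : ℝ) (hx_mem : xstar ∈ Ioo (0:ℝ) (1 / (U : ℝ)))
    (hx_eq : g' xstar * (1 - xstar) = ((U : ℝ) - 1) * g xstar) :
    ∑ s, πS s * ((U : ℝ) * G s * (1 - P s) ^ (U - 1)) <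
      ∑ s, πS s * ((U : ℝ) * g (min xstar (β s)) *
        (1 - min xstar (β s)) ^ (U - 1)) := by
  have hxstar : xstar ∈ Ioo (0 : ℝ) 1 :=
    ⟨hx_mem.1, hx_mem.2.trans_le (div_le_one_of_le₀ (by norm_cast; omega) (by positivity))⟩
  obtain ⟨k, rfl⟩ : ∃ k, U = k + 2 := ⟨U - 2, by omega⟩
  obtain ⟨hF_mono, hF_anti⟩ := monotoneOn_antitoneOn_mul_one_sub_pow k hg_deriv
    (hg_mono.monotoneOn.mono Ioo_subset_Icc_self)
    ((hg_conc.subset Ioo_subset_Icc_self (convex_Ioo 0 1)).strictAntiOn_of_hasDerivAt_s6 hg_deriv)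
    hxstar (by push_cast at hx_eq; linarith)
  refine sum_lt_sum_of_nonempty univ_nonempty fun s _ => mul_lt_mul_of_pos_left ?_ (hπS_pos s)
  have hP_pos : 0 < P s := hP s ▸ sum_mul_pos hn (hπ_pos s) (hη0 s) (hη s)
  have hP_lt_one : P s < 1 := (hPβ s).trans_lt (hβ s).2
  have hjensen : G s < g (P s) := by
    rw [hG, hP]; exact sum_mul_map_lt_map_sum hg_conc hn (hπ_pos s) (hπ_sum s) (hη0 s) (hη s)
  have hpeak := le_apply_min_of_monotoneOn_of_antitoneOn hF_mono hF_anti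
    ⟨hP_pos, hP_lt_one⟩ (hPβ s)
  rw [show k + 2 - 1 = k + 1 by omega]
  calc (↑(k + 2) : ℝ) * G s * (1 - P s) ^ (k + 1)
      < ↑(k + 2) * (g (P s) * (1 - P s) ^ (k + 1)) := by
        rw [mul_assoc]; gcongr
    _ ≤ ↑(k + 2) * (g (min xstar (β s)) * (1 - min xstar (β s)) ^ (k + 1)) := by gcongr
    _ = _ := by ring

/-- Proposition 4: strict upper bound on the network utility under symmetric
threshold policies. -/
theorem network_utility_upper_bound
    (g g' : ℝ → ℝ)
    (hg_cont : ContinuousOn g (Icc 0 1))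
    (hg_mono : StrictMonoOn g (Icc 0 1))
    (hg_conc : StrictConcaveOn ℝ (Icc 0 1) g)
    (hg_deriv : ∀ x ∈ Ioo (0:ℝ) 1, HasDerivAt g (g' x) x)
    (hg'_cont : ContinuousOn g' (Ioo 0 1))
    (hg0 : g 0 = 0)
    (hg'0 : Tendsto g' (𝓝[>] (0:ℝ)) atTop)
    (hg'1 : Tendsto g' (𝓝[<] (1:ℝ)) (𝓝 0))
    (U : ℕ) (hU : 2 ≤ U)
    (S : Type*) [Fintype S] [Nonempty S]
    (πS : S → ℝ) (hπS_pos : ∀ s, 0 < πS s) (hπS_sum : ∑ s, πS s = 1)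
    (β : S → ℝ) (hβ : ∀ s, β s ∈ Ioo (0:ℝ) 1)
    (n : ℕ) (hn : 1 ≤ n)
    (π : S → ℕ → ℝ) (hπ_pos : ∀ s, ∀ e ≤ n, 0 < π s e)
    (hπ_sum : ∀ s, ∑ e ∈ range (n + 1), π s e = 1)
    (η : S → ℕ → ℝ) (hη0 : ∀ s, η s 0 = 0)
    (hη : ∀ s, ∀ e, 1 ≤ e → e ≤ n → η s e ∈ Ioc (0:ℝ) 1)
    (G P : S → ℝ)
    (hG : ∀ s, G s = ∑ e ∈ range (n + 1), π s e * g (η s e))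
    (hP : ∀ s, P s = ∑ e ∈ range (n + 1), π s e * η s e)
    (hPβ : ∀ s, P s ≤ β s)
    (xstar : ℝ) (hx_mem : xstar ∈ Ioo (0:ℝ) (1 / (U : ℝ)))
    (hx_eq : g' xstar * (1 - xstar) = ((U : ℝ) - 1) * g xstar) :
    ∑ s, πS s * ((U : ℝ) * G s * (1 - P s) ^ (U - 1)) <
      ∑ s, πS s * ((U : ℝ) * g (min xstar (β s)) *
        (1 - min xstar (β s)) ^ (U - 1)) :=
  network_utility_upper_bound_general g g' hg_mono hg_conc hg_deriv U hU S πS hπS_pos β hβ n hn π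
    hπ_pos hπ_sum η hη0 hη G P hG hP hPβ xstar hx_mem hx_eq
end

section
/- (Part of Theorem 1, P3: lower threshold η_L) Fix λ > 0 and β ∈ (0,1); let x*_λ ∈ (0,1) be the unique point with g'(x*_λ) = λ, set z_λ(x) := g(x) − λx and m := min{x*_λ, β}, and define L(w) := g(w) + (1−w)·g'(w) − λ − z_λ(m)/β for w ∈ (0,1). Then L is strictly decreasing on (0,1), lim_{w→0+} L(w) = ∞, and L(m) < 0; consequently there is a unique η_L ∈ (0, m) with L(η_L) = 0, and L(w) > 0 for w ∈ (0, η_L) while L(w) < 0 for w ∈ (η_L, 1). -/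
open Set Filter Topology

/-- Theorem 1, P3 (lower threshold `η_L`): the function
`L(w) = g(w) + (1−w) g'(w) − λ − z_λ(min{x*_λ, β})/β` is strictly decreasing on `(0,1)`,
tends to `∞` as `w → 0⁺`, is negative at `min{x*_λ, β}`, and has a unique zero
`η_L ∈ (0, min{x*_λ, β})`, with `L > 0` before it and `L < 0` after it. -/
theorem lower_threshold_etaL
    (g g' : ℝ → ℝ)
    (hg_cont : ContinuousOn g (Icc 0 1))
    (hg_mono : StrictMonoOn g (Icc 0 1))
    (hg_conc : StrictConcaveOn ℝ (Icc 0 1) g)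
    (hg_deriv : ∀ x ∈ Ioo (0:ℝ) 1, HasDerivAt g (g' x) x)
    (hg'_cont : ContinuousOn g' (Ioo 0 1))
    (hg0 : g 0 = 0)
    (hg'0 : Tendsto g' (𝓝[>] (0:ℝ)) atTop)
    (hg'1 : Tendsto g' (𝓝[<] (1:ℝ)) (𝓝 0))
    (lam : ℝ) (hlam : 0 < lam)
    (β : ℝ) (hβ : β ∈ Ioo (0:ℝ) 1)
    (xstar : ℝ) (hx_mem : xstar ∈ Ioo (0:ℝ) 1) (hx_eq : g' xstar = lam)
    (L : ℝ → ℝ)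
    (hL : ∀ w, L w = g w + (1 - w) * g' w - lam -
      (g (min xstar β) - lam * min xstar β) / β) :
    StrictAntiOn L (Ioo 0 1) ∧
    Tendsto L (𝓝[>] (0:ℝ)) atTop ∧
    L (min xstar β) < 0 ∧
    ∃ ηL ∈ Ioo (0:ℝ) (min xstar β), L ηL = 0 ∧
      (∀ w ∈ Ioo (0:ℝ) (min xstar β), L w = 0 → w = ηL) ∧
      (∀ w ∈ Ioo (0:ℝ) ηL, 0 < L w) ∧
      (∀ w ∈ Ioo ηL (1:ℝ), L w < 0) := by
  have hsub : Ioo (0:ℝ) 1 ⊆ Icc 0 1 := Ioo_subset_Icc_self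
  set m : ℝ := min xstar β with hm_def
  have hm0 : 0 < m := lt_min hx_mem.1 hβ.1
  have hm1 : m < 1 := lt_of_le_of_lt (min_le_right _ _) hβ.2
  have hmIoo : m ∈ Ioo (0:ℝ) 1 := ⟨hm0, hm1⟩
  set C : ℝ := (g m - lam * m) / β with hC_def
  -- strict antitonicity
  have hanti : StrictAntiOn L (Ioo 0 1) := by
    intro w1 h1 w2 h2 h12
    have hs1 : slope g w1 w2 < g' w1 :=
      hg_conc.slope_lt_of_hasDerivAt (hsub h1) (hsub h2) h12 (hg_deriv w1 h1)
    have hs2 : g' w2 < slope g w1 w2 :=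
      hg_conc.lt_slope_of_hasDerivAt (hsub h1) (hsub h2) h12 (hg_deriv w2 h2)
    have hlt : g' w2 < g' w1 := hs2.trans hs1
    rw [slope_def_field] at hs1
    have hne : (0:ℝ) < w2 - w1 := by linarith
    have hs1' : g w2 - g w1 < g' w1 * (w2 - w1) := by
      rwa [div_lt_iff₀ hne] at hs1
    rw [hL, hL]
    nlinarith [mul_pos (sub_pos.2 h2.2) (sub_pos.2 hlt)]
  -- tendsto atTop
  have hg0' : Tendsto g (𝓝[>] (0:ℝ)) (𝓝 0) := by
    have h0 : Tendsto g (𝓝[Icc 0 1] (0:ℝ)) (𝓝 0) := by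
      have := hg_cont 0 ⟨le_refl 0, zero_le_one⟩
      rwa [ContinuousWithinAt, hg0] at this
    have hle : 𝓝[>] (0:ℝ) = 𝓝[Ioo (0:ℝ) 1] 0 :=
      (nhdsWithin_Ioo_eq_nhdsGT one_pos).symm
    rw [hle]
    exact h0.mono_left (nhdsWithin_mono _ hsub)
  have htop : Tendsto L (𝓝[>] (0:ℝ)) atTop := by
    have h1 : Tendsto (fun w : ℝ => 1 - w) (𝓝[>] (0:ℝ)) (𝓝 1) := by
      have : Tendsto (fun w : ℝ => 1 - w) (𝓝 (0:ℝ)) (𝓝 (1 - 0)) :=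
        tendsto_const_nhds.sub tendsto_id
      simpa using this.mono_left nhdsWithin_le_nhds
    have h2 : Tendsto (fun w => (1 - w) * g' w) (𝓝[>] (0:ℝ)) atTop :=
      h1.pos_mul_atTop one_pos hg'0
    have h3 : Tendsto (fun w => g w - lam - C) (𝓝[>] (0:ℝ)) (𝓝 (0 - lam - C)) :=
      (hg0'.sub_const lam).sub_const C
    have h4 := h3.add_atTop h2
    refine h4.congr fun w => ?_
    rw [hL]; ring
  -- slope inequality at m
  have hsm : g' m < slope g 0 m :=
    hg_conc.lt_slope_of_hasDerivAt ⟨le_refl 0, zero_le_one⟩ (hsub hmIoo) hm0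
      (hg_deriv m hmIoo)
  have hsm' : m * g' m < g m := by
    rw [slope_def_field, hg0, sub_zero, sub_zero] at hsm
    rwa [lt_div_iff₀ hm0, mul_comm] at hsm
  -- L m < 0
  have hLm : L m < 0 := by
    have hβ0 : (0:ℝ) < β := hβ.1
    have hE : C * β = g m - lam * m := div_mul_cancel₀ _ (ne_of_gt hβ0)
    rw [hL]
    rcases le_total xstar β with hc | hc
    · -- m = xstar, g' m = lam
      have hmx : m = xstar := min_eq_left hc
      have hgm : g' m = lam := by rw [hmx, hx_eq]
      have hpos : 0 < g m - lam * m := by nlinarith [hsm', hgm]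
      have hCpos : 0 < C := div_pos hpos hβ0
      rw [hgm]
      nlinarith [mul_pos hCpos (sub_pos.2 hβ.2), hE]
    · -- m = β
      have hmb : m = β := min_eq_right hc
      rw [hmb] at hE hsm' ⊢
      nlinarith [mul_pos (sub_pos.2 hβ.2) (sub_pos.2 hsm'), hE, hβ0,
        mul_pos hβ0 hβ0]
  -- continuity of L on Ioo 0 1
  have hLcont : ContinuousOn L (Ioo (0:ℝ) 1) := by
    have : ContinuousOn (fun w => g w + (1 - w) * g' w - lam - C) (Ioo (0:ℝ) 1) :=
      (((hg_cont.mono hsub).add ((continuousOn_const.sub continuousOn_id).mul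
        hg'_cont)).sub continuousOn_const).sub continuousOn_const
    exact this.congr fun w _ => hL w
  -- existence of a point with L > 0 below m
  obtain ⟨a, haL, haM⟩ : ∃ a, 0 < L a ∧ a ∈ Ioo 0 m := by
    have hev : ∀ᶠ w in 𝓝[>] (0:ℝ), 0 < L w := htop.eventually_gt_atTop 0
    have hev2 : Ioo (0:ℝ) m ∈ 𝓝[>] (0:ℝ) := Ioo_mem_nhdsGT_of_mem ⟨le_refl 0, hm0⟩
    exact (hev.and (eventually_of_mem hev2 fun x hx => hx)).exists
  have hIcc : Icc a m ⊆ Ioo (0:ℝ) 1 := fun t ht =>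
    ⟨lt_of_lt_of_le haM.1 ht.1, lt_of_le_of_lt ht.2 hm1⟩
  obtain ⟨η, hηmem, hη0⟩ : ∃ η ∈ Ioo a m, L η = 0 := by
    have hiv := intermediate_value_Ioo' (le_of_lt haM.2) (hLcont.mono hIcc)
    obtain ⟨η, hη, hη0⟩ := hiv ⟨hLm, haL⟩
    exact ⟨η, hη, hη0⟩
  have hηIoo : η ∈ Ioo (0:ℝ) m := ⟨lt_trans haM.1 hηmem.1, hηmem.2⟩
  have hη01 : η ∈ Ioo (0:ℝ) 1 := ⟨hηIoo.1, lt_trans hηIoo.2 hm1⟩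
  refine ⟨hanti, htop, hLm, η, hηIoo, hη0, ?_, ?_, ?_⟩
  · intro w hw hw0
    have hw01 : w ∈ Ioo (0:ℝ) 1 := ⟨hw.1, lt_trans hw.2 hm1⟩
    rcases lt_trichotomy w η with h | h | h
    · exact absurd (hη0 ▸ hanti hw01 hη01 h) (by rw [hw0]; exact lt_irrefl 0)
    · exact h
    · exact absurd (hw0 ▸ hanti hη01 hw01 h) (by rw [hη0]; exact lt_irrefl 0)
  · intro w hw
    have hw01 : w ∈ Ioo (0:ℝ) 1 := ⟨hw.1, lt_trans hw.2 hη01.2⟩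
    have := hanti hw01 hη01 hw.2
    rwa [hη0] at this
  · intro w hw
    have hw01 : w ∈ Ioo (0:ℝ) 1 := ⟨lt_trans hη01.1 hw.1, hw.2⟩
    have := hanti hη01 hw01 hw.1
    rwa [hη0] at this
end

section
/- (Part of Theorem 1, P3: upper threshold η_U) Fix λ > 0 and β ∈ (0,1); let x*_λ ∈ (0,1) be the unique point with g'(x*_λ) = λ, set z_λ(x) := g(x) − λx and m := min{x*_λ, β}, and define W(w) := −g(w) + w·g'(w) + z_λ(m) for w ∈ (0,1). Then W is strictly decreasing on (0,1), and: if x*_λ ≤ β then W(x*_λ) = 0, so η_U := x*_λ is the unique zero of W; if x*_λ > β then W(β) > 0 and W(x*_λ) < 0, so W has a unique zero η_U ∈ (β, x*_λ). In either case η_U ∈ [min{β, x*_λ}, x*_λ]. -/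
open Set Filter Topology

/-!
Writing `W w = c - (g w - w g'(w))`, the term `g w - w g'(w)` is the intercept at `0` of the
tangent to `g` at `w`. For a strictly concave `g` and `0 < a < b`, the secant slope `s` over
`[a, b]` lies strictly between `g' b` and `g' a`, so the intercept grows by
`b (s - g' b) + a (g' a - s) > 0`: hence `W` is strictly decreasing. At `w = x*` with
`x* ≤ β` the constant `c` is exactly that intercept. When `β < x*`, the same secant bounds give
`W β = β (g' β - λ) > 0` and `W x* = (x* - β)(λ - s) < 0`, and the intermediate value theorem
supplies the zero.
-/

lemma sub_eq_slope_mul_sub (g : ℝ → ℝ) (a b : ℝ) : g b - g a = slope g a b * (b - a) := by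
  simpa only [smul_eq_mul, vsub_eq_sub, mul_comm] using (sub_smul_slope g a b).symm

theorem StrictConcaveOn.strictMonoOn_sub_mul_deriv {s : Set ℝ} {g g' : ℝ → ℝ}
    (hg : StrictConcaveOn ℝ s g) (hs : s ⊆ Ioi 0) (hg' : ∀ x ∈ s, HasDerivAt g (g' x) x) :
    StrictMonoOn (fun w => g w - w * g' w) s := by
  intro a ha b hb hab
  have hb_lt := hg.lt_slope_of_hasDerivAt ha hb hab (hg' b hb)
  have ha_gt := hg.slope_lt_of_hasDerivAt ha hb hab (hg' a ha)
  have hsec := sub_eq_slope_mul_sub g a b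
  have ha₀ : (0 : ℝ) < a := hs ha
  nlinarith

theorem StrictAntiOn.existsUnique_zero_mem_Ioo {f : ℝ → ℝ} {a b : ℝ} (hab : a ≤ b)
    (hf : ContinuousOn f (Icc a b)) (hanti : StrictAntiOn f (Icc a b)) (ha : 0 < f a)
    (hb : f b < 0) : ∃ c ∈ Ioo a b, f c = 0 ∧ ∀ w ∈ Ioo a b, f w = 0 → w = c := by
  obtain ⟨c, hc, hc0⟩ := intermediate_value_Ioo' hab hf ⟨hb, ha⟩
  exact ⟨c, hc, hc0, fun w hw hw0 =>
    hanti.injOn (Ioo_subset_Icc_self hw) (Ioo_subset_Icc_self hc) (hw0.trans hc0.symm)⟩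

theorem upper_threshold_etaU_general
    (g g' : ℝ → ℝ)
    (hg_conc : StrictConcaveOn ℝ (Icc 0 1) g)
    (hg_deriv : ∀ x ∈ Ioo (0:ℝ) 1, HasDerivAt g (g' x) x)
    (hg'_cont : ContinuousOn g' (Ioo 0 1))
    (lam : ℝ)
    (β : ℝ) (hβ : β ∈ Ioo (0:ℝ) 1)
    (xstar : ℝ) (hx_mem : xstar ∈ Ioo (0:ℝ) 1) (hx_eq : g' xstar = lam)
    (W : ℝ → ℝ)
    (hW : ∀ w, W w = -g w + w * g' w +
      (g (min xstar β) - lam * min xstar β)) :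
    StrictAntiOn W (Ioo 0 1) ∧
    (xstar ≤ β → W xstar = 0 ∧ (∀ w ∈ Ioo (0:ℝ) 1, W w = 0 → w = xstar)) ∧
    (β < xstar → 0 < W β ∧ W xstar < 0 ∧
      ∃ ηU ∈ Ioo β xstar, W ηU = 0 ∧ (∀ w ∈ Ioo β xstar, W w = 0 → w = ηU)) ∧
    (∃ ηU ∈ Icc (min β xstar) xstar, W ηU = 0) := by
  have hconc : StrictConcaveOn ℝ (Ioo 0 1) g :=
    hg_conc.subset Ioo_subset_Icc_self (convex_Ioo 0 1)
  have hanti : StrictAntiOn W (Ioo 0 1) := fun a ha b hb hab => by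
    have := hconc.strictMonoOn_sub_mul_deriv (fun x hx => hx.1) hg_deriv ha hb hab
    simp only [hW]
    linarith
  have hcont : ContinuousOn W (Ioo 0 1) := by
    have hg_cont : ContinuousOn g (Ioo 0 1) := fun x hx =>
      (hg_deriv x hx).continuousAt.continuousWithinAt
    exact ((hg_cont.neg.add (continuousOn_id.mul hg'_cont)).add continuousOn_const).congr
      fun w _ => hW w
  have W_xstar_eq_zero (hle : xstar ≤ β) : W xstar = 0 := by
    rw [hW, min_eq_left hle, hx_eq]
    ring
  have sign_change (hlt : β < xstar) : 0 < W β ∧ W xstar < 0 := by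
    have hβ_gt := hconc.slope_lt_of_hasDerivAt hβ hx_mem hlt (hg_deriv β hβ)
    have hx_lt := hconc.lt_slope_of_hasDerivAt hβ hx_mem hlt (hg_deriv xstar hx_mem)
    have hsec := sub_eq_slope_mul_sub g β xstar
    rw [hW, hW, min_eq_right hlt.le]
    constructor <;> nlinarith [hβ.1]
  have unique_zero (hlt : β < xstar) :
      ∃ ηU ∈ Ioo β xstar, W ηU = 0 ∧ ∀ w ∈ Ioo β xstar, W w = 0 → w = ηU :=
    have hsub : Icc β xstar ⊆ Ioo 0 1 := Icc_subset_Ioo hβ.1 hx_mem.2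
    StrictAntiOn.existsUnique_zero_mem_Ioo hlt.le (hcont.mono hsub) (hanti.mono hsub)
      (sign_change hlt).1 (sign_change hlt).2
  refine ⟨hanti, fun hle => ⟨W_xstar_eq_zero hle, fun w hw hw0 => ?_⟩,
    fun hlt => ⟨(sign_change hlt).1, (sign_change hlt).2, unique_zero hlt⟩, ?_⟩
  · exact hanti.injOn hw hx_mem (hw0.trans (W_xstar_eq_zero hle).symm)
  · rcases le_or_gt xstar β with hle | hlt
    · exact ⟨xstar, ⟨min_le_right _ _, le_rfl⟩, W_xstar_eq_zero hle⟩
    · obtain ⟨ηU, hηU, hW0, -⟩ := unique_zero hlt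
      exact ⟨ηU, ⟨(min_le_left _ _).trans hηU.1.le, hηU.2.le⟩, hW0⟩

/-- Theorem 1, P3 (upper threshold `η_U`): the function
`W(w) = −g(w) + w g'(w) + z_λ(min{x*_λ, β})` is strictly decreasing on `(0,1)`;
if `x*_λ ≤ β` its unique zero is `x*_λ`, and if `x*_λ > β` it has a unique zero in
`(β, x*_λ)`; in either case the zero lies in `[min{β, x*_λ}, x*_λ]`. -/
theorem upper_threshold_etaU
    (g g' : ℝ → ℝ)
    (hg_cont : ContinuousOn g (Icc 0 1))
    (hg_mono : StrictMonoOn g (Icc 0 1))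
    (hg_conc : StrictConcaveOn ℝ (Icc 0 1) g)
    (hg_deriv : ∀ x ∈ Ioo (0:ℝ) 1, HasDerivAt g (g' x) x)
    (hg'_cont : ContinuousOn g' (Ioo 0 1))
    (hg0 : g 0 = 0)
    (hg'0 : Tendsto g' (𝓝[>] (0:ℝ)) atTop)
    (hg'1 : Tendsto g' (𝓝[<] (1:ℝ)) (𝓝 0))
    (lam : ℝ) (hlam : 0 < lam)
    (β : ℝ) (hβ : β ∈ Ioo (0:ℝ) 1)
    (xstar : ℝ) (hx_mem : xstar ∈ Ioo (0:ℝ) 1) (hx_eq : g' xstar = lam)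
    (W : ℝ → ℝ)
    (hW : ∀ w, W w = -g w + w * g' w +
      (g (min xstar β) - lam * min xstar β)) :
    StrictAntiOn W (Ioo 0 1) ∧
    (xstar ≤ β → W xstar = 0 ∧ (∀ w ∈ Ioo (0:ℝ) 1, W w = 0 → w = xstar)) ∧
    (β < xstar → 0 < W β ∧ W xstar < 0 ∧
      ∃ ηU ∈ Ioo β xstar, W ηU = 0 ∧ (∀ w ∈ Ioo β xstar, W w = 0 → w = ηU)) ∧
    (∃ ηU ∈ Icc (min β xstar) xstar, W ηU = 0) :=
  upper_threshold_etaU_general g g' hg_conc hg_deriv hg'_cont lam β hβ xstar hx_mem hx_eq W hW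
end

section
/- (Proposition 7, monotonicity of the Lagrange map Λ) Let λ₁ > λ₂ ≥ 0, suppose η₁ ∈ S maximizes η ↦ G(η) − λ₁·P(η) over S and η₂ ∈ S maximizes η ↦ G(η) − λ₂·P(η) over S, and assume G(η₁) ≥ 0, P(η₁) < 1, and P(η₂) < 1. Then G(η₁)/(1 − P(η₁)) ≤ G(η₂)/(1 − P(η₂)); consequently, for any integer U ≥ 2, Λ(λ) := (U−1)·G(η_λ)/(1 − P(η_λ)) evaluated at maximizers is non-increasing in λ, and h(λ) := Λ(λ) − λ is strictly decreasing. -/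
/-- Proposition 7 (monotonicity of the Lagrange map `Λ`): for `λ₁ > λ₂ ≥ 0` with
respective maximizers `η₁, η₂`, the ratio `G/(1−P)` at the maximizers is non-increasing
in `λ`; consequently `Λ(λ) = (U−1)·G(η_λ)/(1−P(η_λ))` is non-increasing and
`h(λ) = Λ(λ) − λ` is strictly decreasing. -/
theorem Lambda_monotone
    (S : Type*) [Nonempty S] (G P : S → ℝ)
    (hPnonneg : ∀ η, 0 ≤ P η)
    (lam₁ lam₂ : ℝ) (hlam : lam₁ > lam₂) (hlam₂ : 0 ≤ lam₂)
    (η₁ η₂ : S)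
    (h₁ : ∀ η, G η - lam₁ * P η ≤ G η₁ - lam₁ * P η₁)
    (h₂ : ∀ η, G η - lam₂ * P η ≤ G η₂ - lam₂ * P η₂)
    (hG₁ : 0 ≤ G η₁) (hP₁ : P η₁ < 1) (hP₂ : P η₂ < 1) :
    G η₁ / (1 - P η₁) ≤ G η₂ / (1 - P η₂) ∧
    (∀ U : ℕ, 2 ≤ U →
      ((U : ℝ) - 1) * G η₁ / (1 - P η₁) ≤ ((U : ℝ) - 1) * G η₂ / (1 - P η₂) ∧
      ((U : ℝ) - 1) * G η₁ / (1 - P η₁) - lam₁ <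
        ((U : ℝ) - 1) * G η₂ / (1 - P η₂) - lam₂) := by
  have hA := h₁ η₂
  have hB := h₂ η₁
  have hP12 : P η₁ ≤ P η₂ := by nlinarith
  have hd₁ : (0:ℝ) < 1 - P η₁ := by linarith
  have hd₂ : (0:ℝ) < 1 - P η₂ := by linarith
  have key : G η₁ * (1 - P η₂) ≤ G η₂ * (1 - P η₁) := by
    nlinarith [mul_nonneg hG₁ (sub_nonneg.2 hP12),
      mul_nonneg (mul_nonneg hlam₂ (sub_nonneg.2 hP12)) hd₁.le,
      mul_le_mul_of_nonneg_right hB hd₁.le]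
  have hmain : G η₁ / (1 - P η₁) ≤ G η₂ / (1 - P η₂) :=
    (div_le_div_iff₀ hd₁ hd₂).mpr key
  refine ⟨hmain, fun U hU => ?_⟩
  have hU1 : (1:ℝ) ≤ (U:ℝ) - 1 := by
    have : (2:ℝ) ≤ (U:ℝ) := by exact_mod_cast hU
    linarith
  have h1 : ((U : ℝ) - 1) * G η₁ / (1 - P η₁) ≤ ((U : ℝ) - 1) * G η₂ / (1 - P η₂) := by
    rw [mul_div_assoc, mul_div_assoc]
    exact mul_le_mul_of_nonneg_left hmain (by linarith)
  exact ⟨h1, by linarith⟩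
end

section
/- (Closed form of the outage probability of the heuristic policy, Section V) Let n ≥ 1 be an integer, β ∈ (0,1), x ∈ (0,1], and let π : {0,…,n} → ℝ be a probability vector (π(e) ≥ 0, Σ_e π(e) = 1) satisfying π(0)·β = π(1)·(1−β)·x and π(e)·β·(1−x) = π(e+1)·(1−β)·x for 1 ≤ e ≤ n−1. Then, with r := β(1−x)/((1−β)x): if x ≠ β, π(0) = (β − x)/(β·rⁿ − x); and if x = β, π(0) = (1−β)/(n + 1 − β). -/
open Finset

/-!
The detailed balance equations make the chain geometric above level `1`:
`π (k + 1) = π 1 * r ^ k`, while `π 1 = π 0 * β / ((1 - β) x)`. Substituting into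
`∑ π = 1` gives one linear equation for `π 0`. Since `(r - 1)(1 - β) x = β - x`, multiplying
it by `β - x` and telescoping the geometric sum yields `π 0 * (β rⁿ - x) = β - x`, which is
the closed form when `x ≠ β`; when `x = β` the ratio is `r = 1` and the geometric sum is `n`.
-/

theorem eq_mul_pow_of_succ_eq_mul {M : Type*} [Monoid M] {f : ℕ → M} {r : M} {n : ℕ}
    (h : ∀ e, 1 ≤ e → e < n → f (e + 1) = f e * r) :
    ∀ k < n, f (k + 1) = f 1 * r ^ k := by
  intro k hk
  induction k with
  | zero => simp
  | succ k ih => rw [h (k + 1) (by omega) (by omega), ih (by omega), pow_succ, mul_assoc]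

theorem sum_range_succ_eq_add_mul_geom_sum {R : Type*} [CommSemiring R] {f : ℕ → R} {r : R}
    {n : ℕ} (h : ∀ k < n, f (k + 1) = f 1 * r ^ k) :
    ∑ e ∈ range (n + 1), f e = f 0 + f 1 * ∑ k ∈ range n, r ^ k := by
  rw [sum_range_succ', mul_sum, add_comm]
  congr 1
  exact sum_congr rfl fun k hk => h k (mem_range.1 hk)

section Outage

variable {K : Type*} [Field K] {π₀ π₁ β x r : K} {n : ℕ}

theorem outage_mul_eq (hc : (1 - β) * x ≠ 0) (hr : r * ((1 - β) * x) = β * (1 - x))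
    (h₀ : π₀ * β = π₁ * ((1 - β) * x)) (hsum : π₀ + π₁ * ∑ k ∈ range n, r ^ k = 1) :
    π₀ * (β * r ^ n - x) = β - x := by
  have htele := geom_sum_mul r n
  apply mul_left_cancel₀ hc
  linear_combination (1 - β) * x * (β - x) * hsum + (1 - β) * x * (r ^ n - 1) * h₀
    - ((1 - β) * x) ^ 2 * π₁ * htele + (1 - β) * x * π₁ * (∑ k ∈ range n, r ^ k) * hr

theorem outage_mul_eq_of_eq (hβ : β ≠ 0) (h₀ : π₀ * β = π₁ * ((1 - β) * β))
    (hsum : π₀ + π₁ * n = 1) : π₀ * (n + 1 - β) = 1 - β := by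
  apply mul_left_cancel₀ hβ
  linear_combination β * (1 - β) * hsum + n * h₀

end Outage

theorem heuristic_outage_probability_general
    (n : ℕ)
    (β : ℝ) (hβ : β ∈ Set.Ioo (0:ℝ) 1)
    (x : ℝ) (hx : x ∈ Set.Ioc (0:ℝ) 1)
    (π : ℕ → ℝ)
    (hπsum : ∑ e ∈ range (n + 1), π e = 1)
    (hbal0 : π 0 * β = π 1 * ((1 - β) * x))
    (hbal : ∀ e, 1 ≤ e → e ≤ n - 1 →
      π e * (β * (1 - x)) = π (e + 1) * ((1 - β) * x))
    (r : ℝ) (hr : r = β * (1 - x) / ((1 - β) * x)) :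
    (x ≠ β → π 0 = (β - x) / (β * r ^ n - x)) ∧
    (x = β → π 0 = (1 - β) / ((n : ℝ) + 1 - β)) := by
  have hc : (1 - β) * x ≠ 0 := mul_ne_zero (sub_ne_zero.2 hβ.2.ne') hx.1.ne'
  have hrc : r * ((1 - β) * x) = β * (1 - x) := by rw [hr, div_mul_cancel₀ _ hc]
  have hgeom : ∀ k < n, π (k + 1) = π 1 * r ^ k := eq_mul_pow_of_succ_eq_mul fun e he1 hen =>
    mul_right_cancel₀ hc (by rw [mul_assoc, hrc, hbal e he1 (by omega)])
  rw [sum_range_succ_eq_add_mul_geom_sum hgeom] at hπsum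
  refine ⟨fun hne => ?_, fun heq => ?_⟩
  · have key := outage_mul_eq hc hrc hbal0 hπsum
    refine eq_div_of_mul_eq (fun h => ?_) key
    rw [h, mul_zero, eq_comm, sub_eq_zero] at key
    exact hne key.symm
  · subst heq
    have hr1 : r = 1 := mul_right_cancel₀ hc (by rw [hrc]; ring)
    simp only [hr1, one_pow, sum_const, card_range, nsmul_eq_mul, mul_one] at hπsum
    exact eq_div_of_mul_eq (by linarith [hβ.2]) (outage_mul_eq_of_eq hβ.1.ne' hbal0 hπsum)

/-- Closed form of the battery-depletion (outage) probability under the heuristic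
policy (Section V): with `r = β(1−x)/((1−β)x)`, the stationary probability of the
empty-battery state is `(β − x)/(β rⁿ − x)` if `x ≠ β`, and `(1−β)/(n + 1 − β)` if
`x = β`. -/
theorem heuristic_outage_probability
    (n : ℕ) (hn : 1 ≤ n)
    (β : ℝ) (hβ : β ∈ Set.Ioo (0:ℝ) 1)
    (x : ℝ) (hx : x ∈ Set.Ioc (0:ℝ) 1)
    (π : ℕ → ℝ)
    (hπnonneg : ∀ e ≤ n, 0 ≤ π e)
    (hπsum : ∑ e ∈ range (n + 1), π e = 1)
    (hbal0 : π 0 * β = π 1 * ((1 - β) * x))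
    (hbal : ∀ e, 1 ≤ e → e ≤ n - 1 →
      π e * (β * (1 - x)) = π (e + 1) * ((1 - β) * x))
    (r : ℝ) (hr : r = β * (1 - x) / ((1 - β) * x)) :
    (x ≠ β → π 0 = (β - x) / (β * r ^ n - x)) ∧
    (x = β → π 0 = (1 - β) / ((n : ℝ) + 1 - β)) :=
  heuristic_outage_probability_general n β hβ x hx π hπsum hbal0 hbal r hr
end

section
/- (Network-limited exponential decay bound, Section V-B) Let n ≥ 1 be an integer and let x, β be reals with 0 < x < β < 1. Set r := β(1−x)/((1−β)x) and α := ln r. Then r > 1 (equivalently α > 0) and 0 < (β − x)/(β·rⁿ − x) < e^{−αn}; i.e., in the network-limited scenario the probability of battery depletion under the heuristic policy decays exponentially with the battery capacity n. -/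
/-- Network-limited exponential decay bound (Section V-B): for `0 < x < β < 1`, with
`r = β(1−x)/((1−β)x)` and `α = ln r`, we have `r > 1` (equivalently `α > 0`) and the
battery-depletion probability satisfies `0 < (β − x)/(β rⁿ − x) < e^{−α n}`. -/
theorem network_limited_exponential_decay
    (n : ℕ) (hn : 1 ≤ n)
    (x β : ℝ) (hx : 0 < x) (hxβ : x < β) (hβ : β < 1)
    (r α : ℝ)
    (hr : r = β * (1 - x) / ((1 - β) * x))
    (hα : α = Real.log r) :
    1 < r ∧ 0 < α ∧
    0 < (β - x) / (β * r ^ n - x) ∧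
    (β - x) / (β * r ^ n - x) < Real.exp (-α * n) := by
  have hden : (0:ℝ) < (1 - β) * x := mul_pos (by linarith) hx
  have hr1 : 1 < r := by
    rw [hr, lt_div_iff₀ hden]; nlinarith
  have hα0 : 0 < α := by
    rw [hα]; exact Real.log_pos hr1
  have hrn : 1 < r ^ n := one_lt_pow₀ hr1 (by omega)
  have hrn0 : (0:ℝ) < r ^ n := by positivity
  have hden2 : 0 < β * r ^ n - x := by nlinarith
  have hnum : 0 < β - x := by linarith
  refine ⟨hr1, hα0, div_pos hnum hden2, ?_⟩
  have hexp : Real.exp (-α * n) = (r ^ n)⁻¹ := by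
    rw [hα, show -Real.log r * n = -(n * Real.log r) by ring, Real.exp_neg,
      Real.exp_nat_mul, Real.exp_log (by linarith)]
  rw [hexp, inv_eq_one_div, div_lt_div_iff₀ hden2 hrn0]
  nlinarith
end
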